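/- Elasticity bound for simple graphs: Let G = (V,E,r) be a simple graph (i.e., r is injective, so there is at most one edge between any two vertices), let m ≥ 1, and suppose that every connected component of G has at most m vertices (i.e., for every vertex v, the set of vertices joined to v by a walk of edges, including v itself, has cardinality at most m). If an element a ∈ A(G) can be written both as a sum of k atoms and as a sum of l atoms, with k ≥ 1, then l·m ≤ (m² − 2m + 2)·k. (In other words, the elasticity of A(G) is at most m − 2 + 2/m.) -/

import Mathlib

/-- An agglomeration on the graph given by `r : E → Sym2 V`. -/
def IsAgg {V E : Type*} (r : E → Sym2 V) (a : (V → ℕ) × (E → ℕ)) : Prop :=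
  ∀ (e : E) (v : V), v ∈ r e → a.2 e ≤ a.1 v

/-- An atom of the monoid of agglomerations. -/
def IsAtomAgg {V E : Type*} (r : E → Sym2 V) (a : (V → ℕ) × (E → ℕ)) : Prop :=
  IsAgg r a ∧ a ≠ 0 ∧
    ∀ b c : (V → ℕ) × (E → ℕ), IsAgg r b → IsAgg r c → a = b + c → b = 0 ∨ c = 0

/-- `AggJoined r E' x y`: `x` and `y` are joined by a walk using only edges in `E'`. -/
def AggJoined {V E : Type*} (r : E → Sym2 V) (E' : Set E) : V → V → Prop :=
  Relation.ReflTransGen (fun x y => ∃ e ∈ E', r e = s(x, y))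

/-! An atom of `A(G)` is the `0/1` indicator of a connected subgraph `(W, F)`: the vertices
reachable from a vertex of its support along edges of positive weight, together with those
edges, form an agglomeration that can be split off, so by atomicity it is everything.
Hence `|W| ≤ m`, `|W| ≤ |F| + 1` (connectedness) and `2|F| ≤ |W|(|W| - 1)` (simplicity), the
last giving `2|F| + m ≤ m|W|` as `1 ≤ |W| ≤ m`. Summing the vertex mass `S` and the edge mass
`T` of `a` over the two factorizations gives `S ≤ km`, `S ≤ T + k` and `lm + 2T ≤ mS`, whence
`lm ≤ (m - 2)S + 2k ≤ (m² - 2m + 2)k`. -/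

open Finset

lemma Finset.card_le_natCard_subtype {α : Type*} [Finite α] {P : α → Prop} {W : Finset α}
    (h : ∀ w ∈ W, P w) : #W ≤ Nat.card {w // P w} := by
  calc #W = Nat.card (W : Set α) := ((Nat.card_coe_set_eq _).trans (Set.ncard_coe_finset W)).symm
    _ ≤ Nat.card {w // P w} := Nat.card_mono (Set.toFinite {w | P w}) h

namespace AggJoined

variable {V E : Type*} {r : E → Sym2 V}

lemma mono {E₁ E₂ : Set E} (h : E₁ ⊆ E₂) {x y : V} (hxy : AggJoined r E₁ x y) :
    AggJoined r E₂ x y :=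
  Relation.ReflTransGen.mono (fun _ _ ⟨e, he, hr⟩ => ⟨e, h he, hr⟩) _ _ hxy

lemma of_mem_of_mem {E' : Set E} {x y v : V} {e : E} (hxy : AggJoined r E' x y) (he : e ∈ E')
    (hy : y ∈ r e) (hv : v ∈ r e) : AggJoined r E' x v := by
  obtain rfl | hyv := eq_or_ne y v
  · exact hxy
  · exact hxy.tail ⟨e, he, (Sym2.mem_and_mem_iff hyv).mp ⟨hy, hv⟩⟩

lemma iff_reachable_fromEdgeSet {E' : Set E} {x y : V} :
    AggJoined r E' x y ↔ (SimpleGraph.fromEdgeSet (r '' E')).Reachable x y := by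
  have : Sym2.ToRel (r '' E') = fun x y => ∃ e ∈ E', r e = s(x, y) := by
    ext; simp [Sym2.toRel_prop]
  rw [SimpleGraph.reachable_fromEdgeSet_eq_reflTransGen_toRel, this, AggJoined]

lemma card_le_card_add_one [Finite V] (F : Finset E) (x : V) :
    Nat.card {y // AggJoined r F x y} ≤ #F + 1 := by
  set G := SimpleGraph.fromEdgeSet (r '' F)
  set C := G.connectedComponentMk x
  calc Nat.card {y // AggJoined r F x y} = Nat.card C.supp :=
        Nat.card_congr <| Equiv.subtypeEquivRight fun y => by
          rw [iff_reachable_fromEdgeSet, SimpleGraph.ConnectedComponent.mem_supp_iff,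
            SimpleGraph.ConnectedComponent.eq]
          exact SimpleGraph.reachable_comm
    _ ≤ Nat.card C.toSimpleGraph.edgeSet + 1 :=
        C.connected_toSimpleGraph.card_vert_le_card_edgeSet_add_one
    _ ≤ Nat.card G.edgeSet + 1 := by
        gcongr
        exact Nat.card_le_card_of_injective _ (SimpleGraph.Embedding.induce _).mapEdgeSet.injective
    _ ≤ Nat.card (r '' F) + 1 := by
        gcongr
        exact Nat.card_mono (Set.toFinite _) (by simp [G, SimpleGraph.edgeSet_fromEdgeSet])
    _ ≤ #F + 1 := by
        gcongr
        simpa using Set.ncard_image_le (f := r) (s := (F : Set E)) F.finite_toSet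

end AggJoined

section Graph

variable {V E : Type*} {r : E → Sym2 V}

lemma card_le_choose_two_of_injective (hr : ∀ e, ¬ (r e).IsDiag)
    (hsimple : Function.Injective r) {W : Finset V} {F : Finset E}
    (hF : ∀ e ∈ F, ∀ v ∈ r e, v ∈ W) : #F ≤ (#W).choose 2 := by
  classical
  rw [← Sym2.card_image_offDiag]
  refine card_le_card_of_injOn r (fun e he => ?_) hsimple.injOn
  induction hre : r e using Sym2.ind with
  | _ x y =>
    have hxy : x ≠ y := fun h => hr e (by simp [hre, h])
    have hx := hF e he x (by simp [hre])
    have hy := hF e he y (by simp [hre])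
    simpa using ⟨x, y, ⟨hx, hy, hxy⟩, Or.inl ⟨rfl, rfl⟩⟩

end Graph

lemma two_mul_add_le_mul_of_le_choose_two {f w m : ℕ} (hf : f ≤ w.choose 2) (hw : 1 ≤ w)
    (hwm : w ≤ m) : 2 * f + m ≤ m * w := by
  have h2 : 2 * w.choose 2 = w * (w - 1) := by
    rw [Nat.choose_two_right, Nat.mul_div_cancel' (Nat.even_mul_pred_self w).two_dvd]
  obtain ⟨w, rfl⟩ := Nat.exists_eq_add_of_le' hw
  obtain ⟨m, rfl⟩ := Nat.exists_eq_add_of_le hwm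
  simp only [Nat.add_sub_cancel] at h2
  nlinarith

section Agglomeration

variable {V E : Type*} {r : E → Sym2 V}

noncomputable def aggIndicator (W : Finset V) (F : Finset E) : (V → ℕ) × (E → ℕ) :=
  ((W : Set V).indicator 1, (F : Set E).indicator 1)

lemma sum_fst_aggIndicator [Fintype V] (W : Finset V) (F : Finset E) :
    ∑ v, (aggIndicator W F).1 v = #W := by
  simp [aggIndicator, sum_indicator_subset _ (subset_univ W)]

lemma sum_snd_aggIndicator [Fintype E] (W : Finset V) (F : Finset E) :
    ∑ e, (aggIndicator W F).2 e = #F := by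
  simp [aggIndicator, sum_indicator_subset _ (subset_univ F)]

lemma isAgg_aggIndicator {W : Finset V} {F : Finset E} (hF : ∀ e ∈ F, ∀ v ∈ r e, v ∈ W) :
    IsAgg r (aggIndicator W F) := by
  classical
  intro e v hv
  by_cases he : e ∈ F
  · simp [aggIndicator, he, hF e he v hv]
  · simp [aggIndicator, he]

lemma IsAgg.isAgg_sub_aggIndicator {b : (V → ℕ) × (E → ℕ)} {W : Finset V} {F : Finset E}
    (hb : IsAgg r b) (hF : ∀ e ∈ F, ∀ v ∈ r e, v ∈ W)
    (hbF : ∀ e, b.2 e ≠ 0 → ∀ v ∈ r e, v ∈ W → e ∈ F) :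
    IsAgg r (b - aggIndicator W F) := by
  classical
  intro e v hv
  have hev := hb e v hv
  by_cases he : e ∈ F
  · simp only [aggIndicator, Prod.fst_sub, Prod.snd_sub, Pi.sub_apply, Set.indicator_apply,
      mem_coe, he, hF e he v hv, if_true, Pi.one_apply]
    omega
  · by_cases hvW : v ∈ W
    · have hbe : b.2 e = 0 := by_contra fun h => he (hbF e h v hv hvW)
      simp [aggIndicator, he, hbe]
    · simpa [aggIndicator, Set.indicator_apply, he, hvW] using hev

lemma aggIndicator_le {b : (V → ℕ) × (E → ℕ)} {W : Finset V} {F : Finset E}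
    (hW : ∀ v ∈ W, b.1 v ≠ 0) (hF : ∀ e ∈ F, b.2 e ≠ 0) : aggIndicator W F ≤ b := by
  classical
  refine ⟨fun v => ?_, fun e => ?_⟩
  · by_cases hv : v ∈ W <;> simp [aggIndicator, hv, Nat.one_le_iff_ne_zero, hW]
  · by_cases he : e ∈ F <;> simp [aggIndicator, he, Nat.one_le_iff_ne_zero, hF]

lemma IsAgg.exists_fst_ne_zero {a : (V → ℕ) × (E → ℕ)} (ha : IsAgg r a) (h0 : a ≠ 0) :
    ∃ v, a.1 v ≠ 0 := by
  by_contra! h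
  refine h0 (Prod.ext (funext h) (funext fun e => ?_))
  simpa [h] using ha e _ (Sym2.out_fst_mem (r e))

lemma IsAtomAgg.eq_of_le {b u : (V → ℕ) × (E → ℕ)} (hb : IsAtomAgg r b) (hu : IsAgg r u)
    (hbu : IsAgg r (b - u)) (hle : u ≤ b) (hu0 : u ≠ 0) : b = u := by
  have hsplit : b = u + (b - u) := (add_tsub_cancel_of_le hle).symm
  rw [hsplit, (hb.2.2 u (b - u) hu hbu hsplit).resolve_left hu0, add_zero]

end Agglomeration

section Atom

variable {V E : Type*} [Fintype V] [Fintype E] {r : E → Sym2 V} {b : (V → ℕ) × (E → ℕ)}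

lemma IsAtomAgg.exists_eq_aggIndicator (hb : IsAtomAgg r b) :
    ∃ (x : V) (W : Finset V) (F : Finset E), x ∈ W ∧ (∀ w ∈ W, AggJoined r F x w) ∧
      (∀ e ∈ F, ∀ v ∈ r e, v ∈ W) ∧ b = aggIndicator W F := by
  classical
  obtain ⟨x, hx⟩ := hb.1.exists_fst_ne_zero hb.2.1
  set S : Set E := {e | b.2 e ≠ 0}
  set W := univ.filter (AggJoined r S x)
  set F := univ.filter fun e => b.2 e ≠ 0 ∧ ∀ v ∈ r e, AggJoined r S x v
  have hxW : x ∈ W := mem_filter.mpr ⟨mem_univ x, .refl⟩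
  have hFW : ∀ e ∈ F, ∀ v ∈ r e, v ∈ W := fun e he v hv =>
    mem_filter.mpr ⟨mem_univ v, (mem_filter.mp he).2.2 v hv⟩
  have hbF : ∀ e, b.2 e ≠ 0 → ∀ v ∈ r e, v ∈ W → e ∈ F := fun e he v hv hvW =>
    mem_filter.mpr ⟨mem_univ e, he, fun _ hu => (mem_filter.mp hvW).2.of_mem_of_mem he hv hu⟩
  have hpos : ∀ w, AggJoined r S x w → b.1 w ≠ 0 := by
    intro w hw
    induction hw with
    | refl => exact hx
    | tail _ hstep =>
      obtain ⟨e, he, hre⟩ := hstep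
      exact fun h0 => he (Nat.eq_zero_of_le_zero (h0 ▸ hb.1 e _ (by simp [hre])))
  have hjoined : ∀ w, AggJoined r S x w → AggJoined r F x w := by
    intro w hw
    induction hw with
    | refl => exact .refl
    | tail hxy hstep ih =>
      obtain ⟨e, he, hre⟩ := hstep
      exact ih.tail ⟨e, hbF e he _ (by simp [hre]) (mem_filter.mpr ⟨mem_univ _, hxy⟩), hre⟩
  refine ⟨x, W, F, hxW, fun w hw => hjoined w (mem_filter.mp hw).2, hFW,
    hb.eq_of_le (isAgg_aggIndicator hFW) (hb.1.isAgg_sub_aggIndicator hFW hbF)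
      (aggIndicator_le (fun w hw => hpos w (mem_filter.mp hw).2)
        fun e he => (mem_filter.mp he).2.1) fun h0 => ?_⟩
  simpa [aggIndicator, hxW] using congrFun (congrArg Prod.fst h0) x

lemma IsAtomAgg.sum_fst_le {m : ℕ} (hcomp : ∀ v, Nat.card {w // AggJoined r Set.univ v w} ≤ m)
    (hb : IsAtomAgg r b) : ∑ v, b.1 v ≤ m := by
  obtain ⟨x, W, F, -, hW, -, rfl⟩ := hb.exists_eq_aggIndicator
  rw [sum_fst_aggIndicator]
  exact (card_le_natCard_subtype fun w hw => (hW w hw).mono (Set.subset_univ _)).trans (hcomp x)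

lemma IsAtomAgg.sum_fst_le_sum_snd_add_one (hb : IsAtomAgg r b) :
    ∑ v, b.1 v ≤ ∑ e, b.2 e + 1 := by
  obtain ⟨x, W, F, -, hW, -, rfl⟩ := hb.exists_eq_aggIndicator
  rw [sum_fst_aggIndicator, sum_snd_aggIndicator]
  exact (card_le_natCard_subtype hW).trans (AggJoined.card_le_card_add_one F x)

lemma IsAtomAgg.two_mul_sum_snd_add_le {m : ℕ} (hr : ∀ e, ¬ (r e).IsDiag)
    (hsimple : Function.Injective r)
    (hcomp : ∀ v, Nat.card {w // AggJoined r Set.univ v w} ≤ m) (hb : IsAtomAgg r b) :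
    2 * ∑ e, b.2 e + m ≤ m * ∑ v, b.1 v := by
  have hbm := hb.sum_fst_le hcomp
  obtain ⟨x, W, F, hxW, -, hFW, rfl⟩ := hb.exists_eq_aggIndicator
  rw [sum_fst_aggIndicator] at hbm ⊢
  rw [sum_snd_aggIndicator]
  exact two_mul_add_le_mul_of_le_choose_two (card_le_choose_two_of_injective hr hsimple hFW)
    (card_pos.mpr ⟨x, hxW⟩) hbm

end Atom

lemma sum_fst_sum {V E ι : Type*} [Fintype V] (s : Finset ι) (b : ι → (V → ℕ) × (E → ℕ)) :
    ∑ v, (∑ i ∈ s, b i).1 v = ∑ i ∈ s, ∑ v, (b i).1 v := by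
  rw [Prod.fst_sum, sum_comm]
  simp only [Finset.sum_apply]

lemma sum_snd_sum {V E ι : Type*} [Fintype E] (s : Finset ι) (b : ι → (V → ℕ) × (E → ℕ)) :
    ∑ e, (∑ i ∈ s, b i).2 e = ∑ i ∈ s, ∑ e, (b i).2 e := by
  rw [Prod.snd_sum, sum_comm]
  simp only [Finset.sum_apply]

lemma mul_le_of_le_mul_of_le_add {k l m S T : ℕ} (hS : S ≤ k * m) (hST : S ≤ T + k)
    (hlT : l * m + 2 * T ≤ m * S) : l * m ≤ (m * m + 2 - 2 * m) * k := by
  match m with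
  | 0 => simp
  | 1 => simp only [mul_one, one_mul] at hS hlT ⊢; omega
  | n + 2 =>
    have hcoef : (n + 2) * (n + 2) + 2 - 2 * (n + 2) = n * n + 2 * n + 2 := by
      rw [show (n + 2) * (n + 2) + 2 = n * n + 2 * n + 2 + 2 * (n + 2) by ring, Nat.add_sub_cancel]
    rw [hcoef]
    nlinarith [Nat.mul_le_mul_left n hS]

theorem elasticity_bound_simple_general {V E : Type*} [Fintype V] [Fintype E]
    (r : E → Sym2 V) (hr : ∀ e : E, ¬ (r e).IsDiag)
    (hsimple : Function.Injective r)
    (m : ℕ)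
    (hcomp : ∀ v : V, Nat.card {w : V // AggJoined r Set.univ v w} ≤ m)
    (a : (V → ℕ) × (E → ℕ))
    (k l : ℕ)
    (hka : ∃ b : Fin k → (V → ℕ) × (E → ℕ), (∀ i, IsAtomAgg r (b i)) ∧ a = ∑ i, b i)
    (hla : ∃ c : Fin l → (V → ℕ) × (E → ℕ), (∀ i, IsAtomAgg r (c i)) ∧ a = ∑ i, c i) :
    l * m ≤ (m * m + 2 - 2 * m) * k := by
  obtain ⟨b, hb, rfl⟩ := hka
  obtain ⟨c, hc, hbc⟩ := hla
  refine mul_le_of_le_mul_of_le_add (S := ∑ v, (∑ i, b i).1 v) (T := ∑ e, (∑ i, b i).2 e)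
    ?_ ?_ ?_
  · rw [sum_fst_sum]
    simpa using sum_le_sum (s := univ) fun i _ => (hb i).sum_fst_le hcomp
  · rw [sum_fst_sum, sum_snd_sum]
    simpa [sum_add_distrib] using
      sum_le_sum (s := univ) fun i _ => (hb i).sum_fst_le_sum_snd_add_one
  · rw [hbc, sum_fst_sum, sum_snd_sum, mul_sum, mul_sum]
    simpa [sum_add_distrib, add_comm] using
      sum_le_sum (s := univ) fun i _ => (hc i).two_mul_sum_snd_add_le hr hsimple hcomp

/-- **Elasticity bound for simple graphs**: if `G` is simple and every connected component
of `G` has at most `m` vertices, and `a ∈ A(G)` is both a sum of `k ≥ 1` atoms and a sum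
of `l` atoms, then `l·m ≤ (m² − 2m + 2)·k`; i.e. `ρ(A(G)) ≤ m − 2 + 2/m`. -/
theorem elasticity_bound_simple {V E : Type*} [Fintype V] [Fintype E]
    (r : E → Sym2 V) (hr : ∀ e : E, ¬ (r e).IsDiag)
    (hsimple : Function.Injective r)
    (m : ℕ) (hm : 1 ≤ m)
    (hcomp : ∀ v : V, Nat.card {w : V // AggJoined r Set.univ v w} ≤ m)
    (a : (V → ℕ) × (E → ℕ)) (ha : IsAgg r a)
    (k l : ℕ) (hk : 1 ≤ k)
    (hka : ∃ b : Fin k → (V → ℕ) × (E → ℕ), (∀ i, IsAtomAgg r (b i)) ∧ a = ∑ i, b i)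
    (hla : ∃ c : Fin l → (V → ℕ) × (E → ℕ), (∀ i, IsAtomAgg r (c i)) ∧ a = ∑ i, c i) :
    l * m ≤ (m * m + 2 - 2 * m) * k :=
  elasticity_bound_simple_general r hr hsimple m hcomp a k l hka hla
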